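/- arXiv:2603.05614 — 6 statements merged into one kernel-verified Lean document; each statement's English description precedes it below -/
import Mathlib

section
/- Let E be a finite ground set and let \mathcal{L} be a laminar family of nonempty subsets of E (any two members are either disjoint or one contains the other), with a capacity C_v > 0 for each member L_v ∈ \mathcal{L}. Define f(S) = min over antichains A ⊆ \mathcal{L} covering S (i.e., S ⊆ ∪_{v∈A} L_v) of ∑_{v∈A} C_v, with f(S) = +∞ replaced suitably if no cover exists; assume every singleton is covered by some member of \mathcal{L}. Then f is normalized (f(∅)=0), monotone, and submodular. -/
section Aux

variable {E : Type*} [DecidableEq E]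

/-- The maximal elements of a finite family of finsets. -/
def maxEls (F : Finset (Finset E)) : Finset (Finset E) :=
  F.filter (fun L => ∀ L' ∈ F, L ⊆ L' → L = L')

lemma mem_maxEls {F : Finset (Finset E)} {L : Finset E} :
    L ∈ maxEls F ↔ L ∈ F ∧ ∀ L' ∈ F, L ⊆ L' → L = L' := by
  rw [maxEls, Finset.mem_filter]

lemma maxEls_subset (F : Finset (Finset E)) : maxEls F ⊆ F :=
  Finset.filter_subset _ _

lemma maxEls_antichain (F : Finset (Finset E)) :
    ∀ L ∈ maxEls F, ∀ L' ∈ maxEls F, L ⊆ L' → L = L' := by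
  intro L hL L' hL' hss
  rw [maxEls, Finset.mem_filter] at hL hL'
  exact hL.2 L' hL'.1 hss

lemma maxEls_cover {F : Finset (Finset E)} {L : Finset E} {e : E}
    (hL : L ∈ F) (he : e ∈ L) : ∃ M ∈ maxEls F, e ∈ M := by
  classical
  set s : Finset (Finset E) := F.filter (fun L' => L ⊆ L') with hs
  have hLs : L ∈ s := by simp [hs, hL]
  obtain ⟨M, hMs, hMmax⟩ := Finset.exists_max_image s (fun L' => L'.card) ⟨L, hLs⟩
  rw [hs, Finset.mem_filter] at hMs
  refine ⟨M, ?_, hMs.2 he⟩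
  rw [maxEls, Finset.mem_filter]
  refine ⟨hMs.1, fun L'' hL'' hss => ?_⟩
  have hL''s : L'' ∈ s := by
    rw [hs, Finset.mem_filter]
    exact ⟨hL'', hMs.2.trans hss⟩
  exact Finset.eq_of_subset_of_card_le hss (hMmax L'' hL''s)

end Aux

/-- The rank function of a laminar family with positive capacities,
defined as the minimum capacity-sum over antichain covers, is normalized,
monotone, and submodular. -/
theorem laminar_rank_normalized_monotone_submodular
    {E : Type*} [Fintype E] [DecidableEq E]
    (𝓛 : Finset (Finset E))
    (hne : ∀ L ∈ 𝓛, L.Nonempty)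
    (hlam : ∀ L ∈ 𝓛, ∀ L' ∈ 𝓛, L ∩ L' = ∅ ∨ L ⊆ L' ∨ L' ⊆ L)
    (C : Finset E → ℝ) (hC : ∀ L ∈ 𝓛, 0 < C L)
    (hcov : ∀ e : E, ∃ L ∈ 𝓛, e ∈ L)
    (f : Finset E → ℝ)
    (hf : ∀ S : Finset E,
      f S = sInf {c : ℝ | ∃ A : Finset (Finset E), A ⊆ 𝓛 ∧
        (∀ L ∈ A, ∀ L' ∈ A, L ⊆ L' → L = L') ∧
        S ⊆ A.sup id ∧ c = ∑ v ∈ A, C v}) :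
    f ∅ = 0 ∧
    (∀ S T : Finset E, S ⊆ T → f S ≤ f T) ∧
    (∀ S T : Finset E, f (S ∪ T) + f (S ∩ T) ≤ f S + f T) := by
  classical
  set g : Finset E → Set ℝ := fun S => {c : ℝ | ∃ A : Finset (Finset E), A ⊆ 𝓛 ∧
        (∀ L ∈ A, ∀ L' ∈ A, L ⊆ L' → L = L') ∧
        S ⊆ A.sup id ∧ c = ∑ v ∈ A, C v} with hg
  -- nonnegativity of capacities on subfamilies
  have hsumnn : ∀ A : Finset (Finset E), A ⊆ 𝓛 → 0 ≤ ∑ v ∈ A, C v := fun A hA =>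
    Finset.sum_nonneg (fun v hv => (hC v (hA hv)).le)
  -- 0 is a lower bound
  have hbdd : ∀ S, BddBelow (g S) := by
    intro S
    refine ⟨0, fun c hc => ?_⟩
    obtain ⟨A, hA, -, -, rfl⟩ := hc
    exact hsumnn A hA
  -- the universal cover: maximal elements of 𝓛
  have hmaxcov : ∀ S : Finset E, (∑ v ∈ maxEls 𝓛, C v) ∈ g S := by
    intro S
    refine ⟨maxEls 𝓛, maxEls_subset 𝓛, maxEls_antichain 𝓛, ?_, rfl⟩
    intro e _
    obtain ⟨L, hL, heL⟩ := hcov e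
    obtain ⟨M, hM, heM⟩ := maxEls_cover hL heL
    exact Finset.mem_sup.2 ⟨M, hM, heM⟩
  have hgne : ∀ S, (g S).Nonempty := fun S => ⟨_, hmaxcov S⟩
  have hgfin : ∀ S, (g S).Finite := by
    intro S
    refine Set.Finite.subset (Set.finite_range (fun A : Finset (Finset E) => ∑ v ∈ A, C v)) ?_
    rintro c ⟨A, -, -, -, rfl⟩
    exact ⟨A, rfl⟩
  have hfle : ∀ (S : Finset E) (c : ℝ), c ∈ g S → f S ≤ c := by
    intro S c hc
    rw [hf S]
    exact csInf_le (hbdd S) hc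
  have hfmem : ∀ S : Finset E, f S ∈ g S := by
    intro S
    rw [hf S]
    exact (hgne S).csInf_mem (hgfin S)
  refine ⟨?_, ?_, ?_⟩
  · -- normalized
    have h1 : f ∅ ≤ 0 := hfle ∅ 0 ⟨∅, by simp⟩
    have h2 : 0 ≤ f ∅ := by
      rw [hf ∅]
      refine le_csInf (hgne ∅) ?_
      rintro c ⟨A, hA, -, -, rfl⟩
      exact hsumnn A hA
    linarith
  · -- monotone
    intro S T hST
    obtain ⟨A, hA, hanti, hcovT, hsum⟩ := hfmem T
    rw [hsum]
    exact hfle S _ ⟨A, hA, hanti, hST.trans hcovT, rfl⟩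
  · -- submodular
    intro S T
    obtain ⟨A, hA, hAanti, hAcov, hAsum⟩ := hfmem S
    obtain ⟨B, hB, hBanti, hBcov, hBsum⟩ := hfmem T
    set U : Finset (Finset E) := A ∪ B with hU
    have hU𝓛 : U ⊆ 𝓛 := Finset.union_subset hA hB
    set A' : Finset (Finset E) := maxEls U with hA'
    have hA'U : A' ⊆ U := maxEls_subset U
    -- A' covers S ∪ T
    have hA'cov : S ∪ T ⊆ A'.sup id := by
      intro e he
      rcases Finset.mem_union.1 he with he | he
      · obtain ⟨L, hL, heL⟩ := Finset.mem_sup.1 (hAcov he)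
        obtain ⟨M, hM, heM⟩ := maxEls_cover (Finset.mem_union_left B hL) heL
        exact Finset.mem_sup.2 ⟨M, hM, heM⟩
      · obtain ⟨L, hL, heL⟩ := Finset.mem_sup.1 (hBcov he)
        obtain ⟨M, hM, heM⟩ := maxEls_cover (Finset.mem_union_right A hL) heL
        exact Finset.mem_sup.2 ⟨M, hM, heM⟩
    set W : Finset (Finset E) := (U \ A') ∪ (A ∩ B) with hW
    have hW𝓛 : W ⊆ 𝓛 :=
      Finset.union_subset ((Finset.sdiff_subset).trans hU𝓛)
        ((Finset.inter_subset_left).trans hA)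
    set B' : Finset (Finset E) := maxEls W with hB'
    have hB'W : B' ⊆ W := maxEls_subset W
    -- B' covers S ∩ T
    have hB'cov : S ∩ T ⊆ B'.sup id := by
      intro e he
      obtain ⟨heS, heT⟩ := Finset.mem_inter.1 he
      obtain ⟨LA, hLA, heLA⟩ := Finset.mem_sup.1 (hAcov heS)
      obtain ⟨LB, hLB, heLB⟩ := Finset.mem_sup.1 (hBcov heT)
      -- find a member of W containing e
      have hWmem : ∃ L ∈ W, e ∈ L := by
        by_cases hEq : LA = LB
        · exact ⟨LA, Finset.mem_union_right _ (Finset.mem_inter.2 ⟨hLA, hEq ▸ hLB⟩), heLA⟩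
        · have hcomp := hlam LA (hA hLA) LB (hB hLB)
          have hint : LA ∩ LB ≠ ∅ := by
            intro h
            have : e ∈ LA ∩ LB := Finset.mem_inter.2 ⟨heLA, heLB⟩
            simp [h] at this
          rcases hcomp with h | h | h
          · exact absurd h hint
          · -- LA ⊊ LB : LA not maximal in U
            refine ⟨LA, Finset.mem_union_left _ (Finset.mem_sdiff.2
              ⟨Finset.mem_union_left B hLA, ?_⟩), heLA⟩
            intro hLA'
            exact hEq ((mem_maxEls.1 hLA').2 LB (Finset.mem_union_right A hLB) h)
          · refine ⟨LB, Finset.mem_union_left _ (Finset.mem_sdiff.2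
              ⟨Finset.mem_union_right A hLB, ?_⟩), heLB⟩
            intro hLB'
            exact hEq ((mem_maxEls.1 hLB').2 LA (Finset.mem_union_left B hLA) h).symm
      obtain ⟨L, hLW, heL⟩ := hWmem
      obtain ⟨M, hM, heM⟩ := maxEls_cover hLW heL
      exact Finset.mem_sup.2 ⟨M, hM, heM⟩
    -- the two bounds
    have h1 : f (S ∪ T) ≤ ∑ v ∈ A', C v :=
      hfle _ _ ⟨A', hA'U.trans hU𝓛, maxEls_antichain U, hA'cov, rfl⟩
    have h2 : f (S ∩ T) ≤ ∑ v ∈ B', C v :=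
      hfle _ _ ⟨B', hB'W.trans hW𝓛, maxEls_antichain W, hB'cov, rfl⟩
    -- sum accounting
    have hsum1 : ∑ v ∈ U \ A', C v + ∑ v ∈ A', C v = ∑ v ∈ U, C v :=
      Finset.sum_sdiff hA'U
    have hB'le : ∑ v ∈ B', C v ≤ ∑ v ∈ W, C v :=
      Finset.sum_le_sum_of_subset_of_nonneg hB'W
        (fun i hi _ => (hC i (hW𝓛 hi)).le)
    have hWle : ∑ v ∈ W, C v ≤ ∑ v ∈ U \ A', C v + ∑ v ∈ A ∩ B, C v := by
      calc ∑ v ∈ W, C v ≤ ∑ v ∈ W, C v + ∑ v ∈ (U \ A') ∩ (A ∩ B), C v := by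
            have : 0 ≤ ∑ v ∈ (U \ A') ∩ (A ∩ B), C v :=
              Finset.sum_nonneg fun v hv =>
                (hC v (hW𝓛 (Finset.mem_union_left _ (Finset.mem_of_mem_inter_left hv)))).le
            linarith
        _ = ∑ v ∈ U \ A', C v + ∑ v ∈ A ∩ B, C v := Finset.sum_union_inter
    have hUAB : ∑ v ∈ U, C v + ∑ v ∈ A ∩ B, C v = ∑ v ∈ A, C v + ∑ v ∈ B, C v :=
      Finset.sum_union_inter
    rw [hAsum, hBsum]
    linarith
end

section
/- Let f : 2^E → ℝ≥0 be a normalized, monotone, submodular function on a finite set E, and let u : E → ℝ≥0 be a vector of coordinate-wise upper bounds. Define f'(S) = min_{T ⊆ S} ( f(T) + ∑_{l ∈ S \ T} u_l ). Then f' is normalized, monotone, and submodular, and the polytope {x ∈ ℝ^E_{≥0} : x(S) ≤ f(S) for all S, and x_l ≤ u_l for all l ∈ E} equals the polymatroid {x ∈ ℝ^E_{≥0} : x(S) ≤ f'(S) for all S}. -/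
/-- Intersecting a polymatroid with coordinate-wise upper bounds
yields a polymatroid whose rank function is the convolution
f'(S) = min_{T ⊆ S} (f(T) + ∑_{l ∈ S\T} u_l), which is again normalized,
monotone, and submodular. -/
theorem polymatroid_box_truncation
    {E : Type*} [Fintype E] [DecidableEq E]
    (f : Finset E → ℝ)
    (hf0 : f ∅ = 0)
    (hfnn : ∀ S, 0 ≤ f S)
    (hmono : ∀ S T : Finset E, S ⊆ T → f S ≤ f T)
    (hsub : ∀ S T : Finset E, f (S ∪ T) + f (S ∩ T) ≤ f S + f T)
    (u : E → ℝ) (hu : ∀ e : E, 0 ≤ u e)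
    (f' : Finset E → ℝ)
    (hf' : ∀ S : Finset E,
      f' S = sInf {c : ℝ | ∃ T ⊆ S, c = f T + ∑ l ∈ S \ T, u l}) :
    f' ∅ = 0 ∧
    (∀ S T : Finset E, S ⊆ T → f' S ≤ f' T) ∧
    (∀ S T : Finset E, f' (S ∪ T) + f' (S ∩ T) ≤ f' S + f' T) ∧
    {x : E → ℝ | (∀ e, 0 ≤ x e) ∧ (∀ S : Finset E, ∑ e ∈ S, x e ≤ f S) ∧
        (∀ l : E, x l ≤ u l)} =
      {x : E → ℝ | (∀ e, 0 ≤ x e) ∧ ∀ S : Finset E, ∑ e ∈ S, x e ≤ f' S} := by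
  have hset : ∀ S : Finset E,
      {c : ℝ | ∃ T ⊆ S, c = f T + ∑ l ∈ S \ T, u l} =
      ↑(S.powerset.image (fun T => f T + ∑ l ∈ S \ T, u l)) := by
    intro S
    ext c
    simp [Finset.mem_powerset, eq_comm]
  have hne : ∀ S : Finset E,
      (S.powerset.image (fun T => f T + ∑ l ∈ S \ T, u l)).Nonempty :=
    fun S => ⟨_, Finset.mem_image_of_mem _ (Finset.mem_powerset_self S)⟩
  have hf'min : ∀ S : Finset E,
      f' S = (S.powerset.image (fun T => f T + ∑ l ∈ S \ T, u l)).min' (hne S) := by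
    intro S
    rw [hf', hset]
    exact (hne S).csInf_eq_min'
  have hle : ∀ S T : Finset E, T ⊆ S → f' S ≤ f T + ∑ l ∈ S \ T, u l := by
    intro S T hT
    rw [hf'min]
    exact Finset.min'_le _ _ (Finset.mem_image_of_mem _ (Finset.mem_powerset.2 hT))
  have hex : ∀ S : Finset E, ∃ T, T ⊆ S ∧ f' S = f T + ∑ l ∈ S \ T, u l := by
    intro S
    have h := Finset.min'_mem _ (hne S)
    rw [Finset.mem_image] at h
    obtain ⟨T, hT, hTe⟩ := h
    exact ⟨T, Finset.mem_powerset.1 hT, by rw [hf'min]; exact hTe.symm⟩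
  -- normalized
  have h0 : f' ∅ = 0 := by
    obtain ⟨T, hT, he⟩ := hex ∅
    rw [Finset.subset_empty.mp hT] at he
    simpa [hf0] using he
  -- monotone
  have hmono' : ∀ S T : Finset E, S ⊆ T → f' S ≤ f' T := by
    intro S T hST
    obtain ⟨T', hT', he⟩ := hex T
    have h1 : f' S ≤ f (T' ∩ S) + ∑ l ∈ S \ (T' ∩ S), u l :=
      hle S (T' ∩ S) (Finset.inter_subset_right)
    have h2 : f (T' ∩ S) ≤ f T' := hmono _ _ Finset.inter_subset_left
    have h3 : ∑ l ∈ S \ (T' ∩ S), u l ≤ ∑ l ∈ T \ T', u l := by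
      apply Finset.sum_le_sum_of_subset_of_nonneg
      · intro e he'
        simp only [Finset.mem_sdiff, Finset.mem_inter, not_and] at he' ⊢
        exact ⟨hST he'.1, fun h => he'.2 h he'.1⟩
      · intro e _ _; exact hu e
    linarith
  -- key sum inequality
  have hsum : ∀ S T A B : Finset E,
      ∑ l ∈ (S ∪ T) \ (A ∪ B), u l + ∑ l ∈ (S ∩ T) \ (A ∩ B), u l ≤
      ∑ l ∈ S \ A, u l + ∑ l ∈ T \ B, u l := by
    intro S T A B
    have h : ∀ X : Finset E, ∑ l ∈ X, u l = ∑ l ∈ Finset.univ, if l ∈ X then u l else 0 := by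
      intro X
      rw [Finset.sum_ite_mem]
      simp
    rw [h ((S ∪ T) \ (A ∪ B)), h ((S ∩ T) \ (A ∩ B)), h (S \ A), h (T \ B),
      ← Finset.sum_add_distrib, ← Finset.sum_add_distrib]
    apply Finset.sum_le_sum
    intro e _
    by_cases hS : e ∈ S <;> by_cases hT : e ∈ T <;> by_cases hA : e ∈ A <;>
      by_cases hB : e ∈ B <;>
      simp [hS, hT, hA, hB] <;> linarith [hu e]
  -- submodular
  have hsub' : ∀ S T : Finset E, f' (S ∪ T) + f' (S ∩ T) ≤ f' S + f' T := by
    intro S T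
    obtain ⟨A, hA, hAe⟩ := hex S
    obtain ⟨B, hB, hBe⟩ := hex T
    have h1 : f' (S ∪ T) ≤ f (A ∪ B) + ∑ l ∈ (S ∪ T) \ (A ∪ B), u l :=
      hle _ _ (Finset.union_subset_union hA hB)
    have h2 : f' (S ∩ T) ≤ f (A ∩ B) + ∑ l ∈ (S ∩ T) \ (A ∩ B), u l :=
      hle _ _ (Finset.inter_subset_inter hA hB)
    have h3 := hsub A B
    have h4 := hsum S T A B
    linarith
  refine ⟨h0, hmono', hsub', ?_⟩
  ext x
  constructor
  · rintro ⟨hx0, hxf, hxu⟩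
    refine ⟨hx0, fun S => ?_⟩
    rw [hf'min S]
    apply Finset.le_min'
    intro c hc
    rw [Finset.mem_image] at hc
    obtain ⟨T, hT, rfl⟩ := hc
    have hT' := Finset.mem_powerset.1 hT
    have h1 : ∑ e ∈ T, x e ≤ f T := hxf T
    have h2 : ∑ e ∈ S \ T, x e ≤ ∑ e ∈ S \ T, u e :=
      Finset.sum_le_sum fun e _ => hxu e
    have h3 : ∑ e ∈ S \ T, x e + ∑ e ∈ T, x e = ∑ e ∈ S, x e :=
      Finset.sum_sdiff hT'
    linarith
  · rintro ⟨hx0, hxf'⟩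
    refine ⟨hx0, fun S => ?_, fun l => ?_⟩
    · have h1 : f' S ≤ f S + ∑ l ∈ S \ S, u l := hle S S le_rfl
      simp at h1
      linarith [hxf' S]
    · have h1 : f' {l} ≤ f ∅ + ∑ e ∈ ({l} : Finset E) \ ∅, u e :=
        hle {l} ∅ (Finset.empty_subset _)
      simp [hf0] at h1
      have h2 := hxf' {l}
      simp at h2
      linarith
end

section
/- Gross substitutes is preserved under addition over disjoint item sets: if v₁ is a GS valuation on item set V₁ and v₂ is a GS valuation on item set V₂ with V₁ ∩ V₂ = ∅, then the valuation v(S) = v₁(S ∩ V₁) + v₂(S ∩ V₂) on V₁ ∪ V₂ satisfies the gross-substitutes condition. -/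
/-- Gross-substitutes condition for a valuation `v` over the item set `I`:
for all prices p ≤ q and every bundle S ⊆ I demanded at p, there is a bundle
T ⊆ I demanded at q containing every item of S whose price did not change. -/
def GrossSubstitutes {V : Type*} [DecidableEq V]
    (I : Finset V) (v : Finset V → ℝ) : Prop :=
  ∀ p q : V → ℝ, (∀ s, p s ≤ q s) →
    ∀ S ⊆ I, (∀ S' ⊆ I, v S' - ∑ s ∈ S', p s ≤ v S - ∑ s ∈ S, p s) →
      ∃ T ⊆ I, (∀ T' ⊆ I, v T' - ∑ s ∈ T', q s ≤ v T - ∑ s ∈ T, q s) ∧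
        ∀ s ∈ S, p s = q s → s ∈ T

lemma sum_split {V : Type*} [DecidableEq V] (V₁ V₂ : Finset V)
    (hdisj : Disjoint V₁ V₂) (S : Finset V) (hS : S ⊆ V₁ ∪ V₂) (f : V → ℝ) :
    ∑ s ∈ S, f s = ∑ s ∈ S ∩ V₁, f s + ∑ s ∈ S ∩ V₂, f s := by
  rw [← Finset.sum_union (hdisj.mono (Finset.inter_subset_right) (Finset.inter_subset_right)),
    ← Finset.inter_union_distrib_left, Finset.inter_eq_left.mpr hS]

/-- Gross substitutes is preserved under addition of valuations on
disjoint item sets. -/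
theorem grossSubstitutes_disjoint_sum
    {V : Type*} [Fintype V] [DecidableEq V]
    (V₁ V₂ : Finset V) (hdisj : Disjoint V₁ V₂)
    (v₁ v₂ : Finset V → ℝ)
    (h₁ : GrossSubstitutes V₁ v₁)
    (h₂ : GrossSubstitutes V₂ v₂) :
    GrossSubstitutes (V₁ ∪ V₂) (fun S => v₁ (S ∩ V₁) + v₂ (S ∩ V₂)) := by
  intro p q hpq S hS hmax
  have key : ∀ S' : Finset V, S' ⊆ V₁ ∪ V₂ →
      v₁ (S' ∩ V₁) - ∑ s ∈ S' ∩ V₁, p s + (v₂ (S' ∩ V₂) - ∑ s ∈ S' ∩ V₂, p s)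
        ≤ v₁ (S ∩ V₁) - ∑ s ∈ S ∩ V₁, p s + (v₂ (S ∩ V₂) - ∑ s ∈ S ∩ V₂, p s) := by
    intro S' hS'
    have := hmax S' hS'
    simp only [sum_split V₁ V₂ hdisj S hS p, sum_split V₁ V₂ hdisj S' hS' p] at this
    linarith
  have hint : ∀ (W : Finset V) (A : Finset V), A ⊆ W → W ⊆ V₁ ∪ V₂ →
      A ∩ W = A := fun W A h _ => Finset.inter_eq_left.mpr h
  -- S ∩ V₁ is optimal for v₁
  have hmax₁ : ∀ S' ⊆ V₁, v₁ S' - ∑ s ∈ S', p s ≤ v₁ (S ∩ V₁) - ∑ s ∈ S ∩ V₁, p s := by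
    intro S' hS'
    have hsub : S' ∪ S ∩ V₂ ⊆ V₁ ∪ V₂ :=
      Finset.union_subset (hS'.trans Finset.subset_union_left)
        (Finset.inter_subset_right.trans Finset.subset_union_right)
    have h := key (S' ∪ S ∩ V₂) hsub
    have e1 : (S' ∪ S ∩ V₂) ∩ V₁ = S' := by
      rw [Finset.union_inter_distrib_right, Finset.inter_eq_left.mpr hS',
        Finset.inter_assoc, Finset.inter_comm V₂ V₁,
        Finset.disjoint_iff_inter_eq_empty.mp hdisj]
      simp
    have e2 : (S' ∪ S ∩ V₂) ∩ V₂ = S ∩ V₂ := by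
      rw [Finset.union_inter_distrib_right,
        Finset.disjoint_iff_inter_eq_empty.mp (hdisj.mono_left hS'),
        Finset.inter_assoc, Finset.inter_self]
      simp
    rw [e1, e2] at h
    linarith
  have hmax₂ : ∀ S' ⊆ V₂, v₂ S' - ∑ s ∈ S', p s ≤ v₂ (S ∩ V₂) - ∑ s ∈ S ∩ V₂, p s := by
    intro S' hS'
    have hsub : S ∩ V₁ ∪ S' ⊆ V₁ ∪ V₂ :=
      Finset.union_subset (Finset.inter_subset_right.trans Finset.subset_union_left)
        (hS'.trans Finset.subset_union_right)
    have h := key (S ∩ V₁ ∪ S') hsub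
    have e1 : (S ∩ V₁ ∪ S') ∩ V₁ = S ∩ V₁ := by
      rw [Finset.union_inter_distrib_right,
        Finset.disjoint_iff_inter_eq_empty.mp ((hdisj.symm).mono_left hS'),
        Finset.inter_assoc, Finset.inter_self]
      simp
    have e2 : (S ∩ V₁ ∪ S') ∩ V₂ = S' := by
      rw [Finset.union_inter_distrib_right, Finset.inter_eq_left.mpr hS',
        Finset.inter_assoc,
        Finset.disjoint_iff_inter_eq_empty.mp hdisj]
      simp
    rw [e1, e2] at h
    linarith
  obtain ⟨T₁, hT₁I, hT₁max, hT₁mem⟩ := h₁ p q hpq (S ∩ V₁) Finset.inter_subset_right hmax₁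
  obtain ⟨T₂, hT₂I, hT₂max, hT₂mem⟩ := h₂ p q hpq (S ∩ V₂) Finset.inter_subset_right hmax₂
  refine ⟨T₁ ∪ T₂, Finset.union_subset (hT₁I.trans Finset.subset_union_left)
    (hT₂I.trans Finset.subset_union_right), ?_, ?_⟩
  · intro T' hT'
    have e1 : (T₁ ∪ T₂) ∩ V₁ = T₁ := by
      rw [Finset.union_inter_distrib_right, Finset.inter_eq_left.mpr hT₁I,
        Finset.disjoint_iff_inter_eq_empty.mp (hdisj.symm.mono_left hT₂I)]
      simp
    have e2 : (T₁ ∪ T₂) ∩ V₂ = T₂ := by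
      rw [Finset.union_inter_distrib_right, Finset.inter_eq_left.mpr hT₂I,
        Finset.disjoint_iff_inter_eq_empty.mp (hdisj.mono_left hT₁I)]
      simp
    have hTsub : T₁ ∪ T₂ ⊆ V₁ ∪ V₂ := Finset.union_subset
      (hT₁I.trans Finset.subset_union_left) (hT₂I.trans Finset.subset_union_right)
    have a1 := hT₁max (T' ∩ V₁) Finset.inter_subset_right
    have a2 := hT₂max (T' ∩ V₂) Finset.inter_subset_right
    simp only [sum_split V₁ V₂ hdisj T' hT' q, sum_split V₁ V₂ hdisj _ hTsub q, e1, e2]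
    linarith
  · intro s hsS hps
    rcases Finset.mem_union.mp (hS hsS) with h | h
    · exact Finset.mem_union_left _ (hT₁mem s (Finset.mem_inter.mpr ⟨hsS, h⟩) hps)
    · exact Finset.mem_union_right _ (hT₂mem s (Finset.mem_inter.mpr ⟨hsS, h⟩) hps)
end

section
/- Let f : 2^E → ℝ≥0 be a normalized, monotone, submodular function on a finite set E ordered so that weights w_{e₁} ≥ w_{e₂} ≥ ... ≥ w_{e_n} ≥ 0. Define the greedy solution x by x_{e_k} = f({e₁,...,e_k}) − f({e₁,...,e_{k−1}}). Then x lies in the polymatroid P(f) and maximizes the linear objective ∑_e w_e x_e over P(f). -/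
private lemma abel_aux (W Z : ℕ → ℝ) (hZ0 : Z 0 = 0) (n : ℕ) :
    ∑ i ∈ Finset.range n, W i * (Z (i+1) - Z i) =
      (∑ i ∈ Finset.range n, (W i - W (i+1)) * Z (i+1)) + W n * Z n := by
  induction n with
  | zero => simp [hZ0]
  | succ n ih => rw [Finset.sum_range_succ, Finset.sum_range_succ, ih]; ring

/-- Edmonds' greedy theorem: for a normalized, monotone,
submodular f and elements ordered by nonincreasing nonnegative weights, the
greedy solution x_{e_k} = f({e₁,…,e_k}) − f({e₁,…,e_{k−1}}) lies in the
polymatroid P(f) and maximizes the linear objective ∑ w_e x_e over P(f). -/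
theorem polymatroid_greedy_optimal
    {E : Type*} [Fintype E] [DecidableEq E] {n : ℕ}
    (σ : Fin n ≃ E)
    (f : Finset E → ℝ)
    (hf0 : f ∅ = 0)
    (hfnn : ∀ S, 0 ≤ f S)
    (hmono : ∀ S T : Finset E, S ⊆ T → f S ≤ f T)
    (hsub : ∀ S T : Finset E, f (S ∪ T) + f (S ∩ T) ≤ f S + f T)
    (w : E → ℝ) (hwnn : ∀ e, 0 ≤ w e)
    (hwdec : ∀ i j : Fin n, i ≤ j → w (σ j) ≤ w (σ i))
    (prefixSet : ℕ → Finset E)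
    (hprefix : ∀ k : ℕ,
      prefixSet k = (Finset.univ.filter (fun i : Fin n => (i : ℕ) < k)).image σ)
    (x : E → ℝ)
    (hx : ∀ i : Fin n, x (σ i) = f (prefixSet ((i : ℕ) + 1)) - f (prefixSet (i : ℕ))) :
    (∀ e, 0 ≤ x e) ∧
    (∀ S : Finset E, ∑ e ∈ S, x e ≤ f S) ∧
    (∀ y : E → ℝ, (∀ e, 0 ≤ y e) → (∀ S : Finset E, ∑ e ∈ S, y e ≤ f S) →
      ∑ e : E, w e * y e ≤ ∑ e : E, w e * x e) := by
  -- basic facts about prefix sets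
  have hP0 : prefixSet 0 = ∅ := by simp [hprefix]
  have hPsucc : ∀ k (hk : k < n),
      prefixSet (k+1) = insert (σ ⟨k, hk⟩) (prefixSet k) := by
    intro k hk
    ext e
    simp only [hprefix, Finset.mem_image, Finset.mem_filter, Finset.mem_univ, true_and,
      Finset.mem_insert]
    constructor
    · rintro ⟨j, hj, rfl⟩
      rcases Nat.lt_succ_iff_lt_or_eq.mp hj with h | h
      · exact Or.inr ⟨j, h, rfl⟩
      · exact Or.inl (congrArg σ (Fin.ext h))
    · rintro (rfl | ⟨j, hj, rfl⟩)
      · exact ⟨⟨k, hk⟩, Nat.lt_succ_self k, rfl⟩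
      · exact ⟨j, Nat.lt_succ_of_lt hj, rfl⟩
  have hnot : ∀ k (hk : k < n), σ ⟨k, hk⟩ ∉ prefixSet k := by
    intro k hk h
    rw [hprefix] at h
    rcases Finset.mem_image.mp h with ⟨j, hj, hje⟩
    rcases Finset.mem_filter.mp hj with ⟨-, hj'⟩
    have : j = ⟨k, hk⟩ := σ.injective hje
    subst this
    exact lt_irrefl _ hj'
  have hPn : prefixSet n = Finset.univ := by
    rw [hprefix]
    ext e
    simp only [Finset.mem_image, Finset.mem_filter, Finset.mem_univ, true_and, iff_true]
    exact ⟨σ.symm e, (σ.symm e).isLt, σ.apply_symm_apply e⟩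
  -- nonnegativity of x
  have hxnn : ∀ e, 0 ≤ x e := by
    intro e
    have h := hx (σ.symm e)
    rw [σ.apply_symm_apply] at h
    rw [h, sub_nonneg]
    apply hmono
    rw [hPsucc _ (σ.symm e).isLt]
    exact Finset.subset_insert _ _
  -- the greedy solution sums to f on prefixes
  have hX : ∀ k, k ≤ n → ∑ e ∈ prefixSet k, x e = f (prefixSet k) := by
    intro k
    induction k with
    | zero => intro _; simp [hP0, hf0]
    | succ k ih =>
      intro hk1
      have hk : k < n := hk1
      have e1 := hPsucc k hk
      rw [e1, Finset.sum_insert (hnot k hk), hx ⟨k, hk⟩, ih (le_of_lt hk)]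
      simp only [← e1]
      ring
  -- feasibility of x
  have hxfeas : ∀ S : Finset E, ∑ e ∈ S, x e ≤ f S := by
    intro S
    have key : ∀ i : Fin n, (if σ i ∈ S then x (σ i) else 0) ≤
        f (S ∩ prefixSet ((i : ℕ) + 1)) - f (S ∩ prefixSet (i : ℕ)) := by
      intro i
      have e1 := hPsucc (i : ℕ) i.isLt
      have hni := hnot (i : ℕ) i.isLt
      by_cases hmem : σ i ∈ S
      · rw [if_pos hmem]
        set P := prefixSet (i : ℕ)
        set a := σ i
        have hsub' := hsub P (S ∩ prefixSet ((i : ℕ) + 1))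
        have hu : prefixSet ((i:ℕ)+1) ⊆ P ∪ (S ∩ prefixSet ((i:ℕ)+1)) := by
          rw [e1]
          intro z hz
          rcases Finset.mem_insert.mp hz with rfl | hz
          · exact Finset.mem_union_right _ (Finset.mem_inter.mpr
              ⟨hmem, Finset.mem_insert_self _ _⟩)
          · exact Finset.mem_union_left _ hz
        have hi : P ∩ (S ∩ prefixSet ((i:ℕ)+1)) = S ∩ P := by
          ext z
          simp only [Finset.mem_inter, e1, Finset.mem_insert]
          constructor
          · rintro ⟨h1, h2, h3⟩; exact ⟨h2, h1⟩
          · rintro ⟨h1, h2⟩; exact ⟨h2, h1, Or.inr h2⟩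
        have h1 : f (prefixSet ((i:ℕ)+1)) ≤ f (P ∪ (S ∩ prefixSet ((i:ℕ)+1))) :=
          hmono _ _ hu
        rw [hi] at hsub'
        have := hx i
        change x a = f (prefixSet ((i:ℕ)+1)) - f P at this
        rw [this]
        linarith [hsub', h1]
      · rw [if_neg hmem]
        have : S ∩ prefixSet ((i:ℕ)+1) = S ∩ prefixSet (i:ℕ) := by
          ext z
          simp only [Finset.mem_inter, e1, Finset.mem_insert]
          constructor
          · rintro ⟨h1, rfl | h2⟩
            · exact absurd h1 hmem
            · exact ⟨h1, h2⟩
          · rintro ⟨h1, h2⟩; exact ⟨h1, Or.inr h2⟩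
        rw [this]
        simp
    calc ∑ e ∈ S, x e = ∑ i : Fin n, (if σ i ∈ S then x (σ i) else 0) := by
          rw [Fintype.sum_equiv σ _ (fun e => if e ∈ S then x e else 0) (fun i => rfl)]
          rw [Finset.sum_ite_mem, Finset.univ_inter]
      _ ≤ ∑ i : Fin n, (f (S ∩ prefixSet ((i:ℕ)+1)) - f (S ∩ prefixSet (i:ℕ))) :=
          Finset.sum_le_sum (fun i _ => key i)
      _ = ∑ k ∈ Finset.range n, (f (S ∩ prefixSet (k+1)) - f (S ∩ prefixSet k)) :=
          Fin.sum_univ_eq_sum_range (fun k => f (S ∩ prefixSet (k+1)) - f (S ∩ prefixSet k)) n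
      _ = f (S ∩ prefixSet n) - f (S ∩ prefixSet 0) :=
          Finset.sum_range_sub (fun k => f (S ∩ prefixSet k)) n
      _ = f S := by rw [hPn, hP0, Finset.inter_univ, Finset.inter_empty, hf0, sub_zero]
  refine ⟨hxnn, hxfeas, ?_⟩
  -- optimality
  intro y hy0 hyfeas
  set W : ℕ → ℝ := fun k => if h : k < n then w (σ ⟨k, h⟩) else 0 with hW
  have hWn : W n = 0 := by simp [hW]
  have hWnn : ∀ k, 0 ≤ W k := by
    intro k
    by_cases h : k < n
    · simp [hW, h, hwnn]
    · simp [hW, h]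
  have hWdec : ∀ k, 0 ≤ W k - W (k+1) := by
    intro k
    rw [sub_nonneg]
    by_cases h : k < n
    · by_cases h' : k + 1 < n
      · simp only [hW, dif_pos h, dif_pos h']
        exact hwdec ⟨k, h⟩ ⟨k+1, h'⟩ (by simp [Fin.le_def])
      · simp only [hW, dif_pos h, dif_neg h']
        exact hwnn _
    · have h' : ¬ k + 1 < n := fun hc => h (Nat.lt_of_succ_lt hc)
      simp [hW, h, h']
  -- reindexing lemma
  have reindex : ∀ z : E → ℝ, ∑ e : E, w e * z e =
      ∑ k ∈ Finset.range n, W k * ((∑ e ∈ prefixSet (k+1), z e) - (∑ e ∈ prefixSet k, z e)) := by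
    intro z
    have h1 : ∑ e : E, w e * z e = ∑ i : Fin n, w (σ i) * z (σ i) :=
      (Fintype.sum_equiv σ _ _ (fun i => rfl)).symm
    rw [h1]
    rw [← Fin.sum_univ_eq_sum_range
      (fun k => W k * ((∑ e ∈ prefixSet (k+1), z e) - (∑ e ∈ prefixSet k, z e))) n]
    apply Finset.sum_congr rfl
    intro i _
    have e1 := hPsucc (i : ℕ) i.isLt
    rw [e1, Finset.sum_insert (hnot (i : ℕ) i.isLt)]
    simp only [hW, dif_pos i.isLt, Fin.eta]
    ring
  have habel : ∀ z : E → ℝ, ∑ e : E, w e * z e =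
      ∑ k ∈ Finset.range n, (W k - W (k+1)) * (∑ e ∈ prefixSet (k+1), z e) := by
    intro z
    rw [reindex z, abel_aux W (fun k => ∑ e ∈ prefixSet k, z e) (by simp [hP0]) n,
      hWn, zero_mul, add_zero]
  rw [habel y, habel x]
  apply Finset.sum_le_sum
  intro k hk
  have hk' : k + 1 ≤ n := Finset.mem_range.mp hk
  apply mul_le_mul_of_nonneg_left _ (hWdec k)
  rw [hX (k+1) hk']
  exact hyfeas _
end

section
/- Let f : 2^E → ℤ≥0 be a normalized, monotone, submodular, integer-valued function on a finite set E. Then the polymatroid P(f) is an integral polytope: every vertex of P(f) has integer coordinates. -/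
open Finset

private lemma pert_aux {E : Type*} {P : Set (E → ℝ)} {x : E → ℝ}
    (hx : x ∈ Set.extremePoints ℝ P) {d : E → ℝ} {ε : ℝ} (hε : 0 < ε)
    (h1 : (fun a => x a + ε * d a) ∈ P) (h2 : (fun a => x a - ε * d a) ∈ P) :
    d = 0 := by
  obtain ⟨hxP, hext⟩ := hx
  have hseg : x ∈ openSegment ℝ (fun a => x a + ε * d a) (fun a => x a - ε * d a) := by
    refine ⟨1/2, 1/2, by norm_num, by norm_num, by norm_num, ?_⟩
    funext a
    simp only [Pi.add_apply, Pi.smul_apply, smul_eq_mul]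
    ring
  have h := hext h1 h2 hseg
  funext a
  have h' := congrFun h a
  simp only [Pi.zero_apply]
  have hda : ε * d a = 0 := by linarith [h']
  exact (mul_eq_zero.mp hda).resolve_left hε.ne'

/-- The polymatroid of an integer-valued normalized, monotone,
submodular function is an integral polytope: every vertex (extreme point)
has integer coordinates. -/
theorem polymatroid_integral_vertices
    {E : Type*} [Fintype E] [DecidableEq E]
    (f : Finset E → ℤ)
    (hf0 : f ∅ = 0)
    (hfnn : ∀ S, 0 ≤ f S)
    (hmono : ∀ S T : Finset E, S ⊆ T → f S ≤ f T)
    (hsub : ∀ S T : Finset E, f (S ∪ T) + f (S ∩ T) ≤ f S + f T) :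
    ∀ x ∈ Set.extremePoints ℝ
        {x : E → ℝ | (∀ e, 0 ≤ x e) ∧
          ∀ S : Finset E, ∑ e ∈ S, x e ≤ (f S : ℝ)},
      ∀ e : E, ∃ m : ℤ, x e = (m : ℝ) := by
  classical
  intro x hx
  have hx0 : ∀ e, 0 ≤ x e := hx.1.1
  have hxf : ∀ S : Finset E, ∑ a ∈ S, x a ≤ (f S : ℝ) := hx.1.2
  -- tight sets are closed under intersection
  have tight_inter : ∀ S T : Finset E, (∑ a ∈ S, x a = (f S : ℝ)) →
      (∑ a ∈ T, x a = (f T : ℝ)) → ∑ a ∈ S ∩ T, x a = (f (S ∩ T) : ℝ) := by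
    intro S T hS hT
    have hsum : ∑ a ∈ S ∪ T, x a + ∑ a ∈ S ∩ T, x a = ∑ a ∈ S, x a + ∑ a ∈ T, x a :=
      Finset.sum_union_inter
    have h1 := hxf (S ∪ T)
    have h2 := hxf (S ∩ T)
    have h3 : (f (S ∪ T) : ℝ) + (f (S ∩ T) : ℝ) ≤ (f S : ℝ) + (f T : ℝ) := by
      exact_mod_cast hsub S T
    linarith
  -- every element with positive coordinate lies in a tight set
  have exists_tight : ∀ e : E, 0 < x e →
      ∃ S : Finset E, (∑ a ∈ S, x a = (f S : ℝ)) ∧ e ∈ S := by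
    intro e he
    by_contra hc
    push_neg at hc
    set g : Finset E → ℝ := fun S => if e ∈ S then (f S : ℝ) - ∑ a ∈ S, x a else 1 with hg
    have hgpos : ∀ S, 0 < g S := by
      intro S
      by_cases hS : e ∈ S
      · have hlt : ∑ a ∈ S, x a < (f S : ℝ) :=
          lt_of_le_of_ne (hxf S) (fun h => hc S h hS)
        simp only [hg, if_pos hS]
        linarith
      · simp [hg, hS]
    have hne : (univ : Finset (Finset E)).Nonempty := univ_nonempty
    set ε := min (x e) ((univ : Finset (Finset E)).inf' hne g) with hεdef
    have hεg : ∀ S, ε ≤ g S := fun S =>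
      le_trans (min_le_right _ _) (Finset.inf'_le g (mem_univ S))
    have hεx : ε ≤ x e := min_le_left _ _
    have hε : 0 < ε := lt_min he (by rw [Finset.lt_inf'_iff]; exact fun S _ => hgpos S)
    set d : E → ℝ := fun a => if a = e then (1 : ℝ) else 0 with hd
    have hsumd : ∀ S : Finset E, ∑ a ∈ S, ε * d a = if e ∈ S then ε else 0 := by
      intro S
      simp only [hd, mul_ite, mul_one, mul_zero]
      rw [Finset.sum_ite_eq']
    have h1 : (fun a => x a + ε * d a) ∈ {x : E → ℝ | (∀ e, 0 ≤ x e) ∧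
        ∀ S : Finset E, ∑ e ∈ S, x e ≤ (f S : ℝ)} := by
      refine ⟨fun a => ?_, fun S => ?_⟩
      · show 0 ≤ x a + ε * d a
        by_cases h : a = e
        · have hda : d a = 1 := by simp [hd, h]
          rw [hda]; subst h; linarith
        · have hda : d a = 0 := by simp [hd, h]
          rw [hda]; simpa using hx0 a
      · show ∑ a ∈ S, (x a + ε * d a) ≤ (f S : ℝ)
        rw [Finset.sum_add_distrib, hsumd S]
        by_cases hS : e ∈ S
        · have := hεg S
          simp only [hg, if_pos hS] at this
          simp only [if_pos hS]
          linarith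
        · simp only [if_neg hS, add_zero]
          exact hxf S
    have h2 : (fun a => x a - ε * d a) ∈ {x : E → ℝ | (∀ e, 0 ≤ x e) ∧
        ∀ S : Finset E, ∑ e ∈ S, x e ≤ (f S : ℝ)} := by
      refine ⟨fun a => ?_, fun S => ?_⟩
      · show 0 ≤ x a - ε * d a
        by_cases h : a = e
        · have hda : d a = 1 := by simp [hd, h]
          rw [hda]; subst h; linarith
        · have hda : d a = 0 := by simp [hd, h]
          rw [hda]; simpa using hx0 a
      · show ∑ a ∈ S, (x a - ε * d a) ≤ (f S : ℝ)
        rw [Finset.sum_sub_distrib, hsumd S]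
        by_cases hS : e ∈ S
        · simp only [if_pos hS]; linarith [hxf S]
        · simp only [if_neg hS]; simpa using hxf S
    have hd0 := pert_aux hx hε h1 h2
    have := congrFun hd0 e
    simp [hd] at this
  -- two distinct positive elements cannot have the same tight sets
  have no_shared : ∀ e1 e2 : E, 0 < x e1 → 0 < x e2 → e1 ≠ e2 →
      (∀ S : Finset E, (∑ a ∈ S, x a = (f S : ℝ)) → (e1 ∈ S ↔ e2 ∈ S)) → False := by
    intro e1 e2 h1x h2x hne12 hiff
    set g : Finset E → ℝ := fun S =>
      if (∑ a ∈ S, x a = (f S : ℝ)) then 1 else (f S : ℝ) - ∑ a ∈ S, x a with hg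
    have hgpos : ∀ S, 0 < g S := by
      intro S
      by_cases hS : ∑ a ∈ S, x a = (f S : ℝ)
      · simp [hg, hS]
      · have := lt_of_le_of_ne (hxf S) hS
        simp only [hg, if_neg hS]
        linarith
    have hne : (univ : Finset (Finset E)).Nonempty := univ_nonempty
    set ε := min (min (x e1) (x e2)) ((univ : Finset (Finset E)).inf' hne g) with hεdef
    have hεg : ∀ S, ε ≤ g S := fun S =>
      le_trans (min_le_right _ _) (Finset.inf'_le g (mem_univ S))
    have hεx1 : ε ≤ x e1 := le_trans (min_le_left _ _) (min_le_left _ _)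
    have hεx2 : ε ≤ x e2 := le_trans (min_le_left _ _) (min_le_right _ _)
    have hε : 0 < ε := lt_min (lt_min h1x h2x)
      (by rw [Finset.lt_inf'_iff]; exact fun S _ => hgpos S)
    set d : E → ℝ := fun a => (if a = e1 then (1:ℝ) else 0) - (if a = e2 then (1:ℝ) else 0)
      with hd
    have hsumd : ∀ S : Finset E, ∑ a ∈ S, ε * d a =
        ε * ((if e1 ∈ S then (1:ℝ) else 0) - (if e2 ∈ S then (1:ℝ) else 0)) := by
      intro S
      simp only [hd, mul_sub, Finset.sum_sub_distrib, mul_ite, mul_one, mul_zero]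
      rw [Finset.sum_ite_eq', Finset.sum_ite_eq']
    have hbound : ∀ S : Finset E,
        ε * ((if e1 ∈ S then (1:ℝ) else 0) - (if e2 ∈ S then (1:ℝ) else 0)) ≤ ε ∧
        -(ε * ((if e1 ∈ S then (1:ℝ) else 0) - (if e2 ∈ S then (1:ℝ) else 0))) ≤ ε := by
      intro S
      by_cases hS1 : e1 ∈ S <;> by_cases hS2 : e2 ∈ S <;>
        simp [hS1, hS2] <;> linarith
    have hmemS : ∀ S : Finset E, (∑ a ∈ S, x a = (f S : ℝ)) →
        ((if e1 ∈ S then (1:ℝ) else 0) - (if e2 ∈ S then (1:ℝ) else 0)) = 0 := by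
      intro S hS
      have := hiff S hS
      by_cases hS1 : e1 ∈ S
      · simp [hS1, this.mp hS1]
      · have h2 : e2 ∉ S := fun h => hS1 (this.mpr h)
        simp [hS1, h2]
    have hsumle : ∀ S : Finset E, ∑ a ∈ S, x a + ∑ a ∈ S, ε * d a ≤ (f S : ℝ) := by
      intro S
      rw [hsumd S]
      by_cases hS : ∑ a ∈ S, x a = (f S : ℝ)
      · rw [hmemS S hS, mul_zero, add_zero]
        exact hxf S
      · have hgs := hεg S
        simp only [hg, if_neg hS] at hgs
        have := (hbound S).1
        linarith
    have hsumle' : ∀ S : Finset E, ∑ a ∈ S, x a - ∑ a ∈ S, ε * d a ≤ (f S : ℝ) := by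
      intro S
      rw [hsumd S]
      by_cases hS : ∑ a ∈ S, x a = (f S : ℝ)
      · rw [hmemS S hS, mul_zero, sub_zero]
        exact hxf S
      · have hgs := hεg S
        simp only [hg, if_neg hS] at hgs
        have := (hbound S).2
        linarith
    have hda : ∀ a, 0 ≤ x a + ε * d a ∧ 0 ≤ x a - ε * d a := by
      intro a
      by_cases ha1 : a = e1
      · subst ha1
        have hda : d a = 1 := by simp [hd, hne12]
        rw [hda]
        constructor <;> linarith
      · by_cases ha2 : a = e2
        · subst ha2
          have hda : d a = -1 := by simp [hd, ha1]
          rw [hda]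
          constructor <;> linarith
        · have hda : d a = 0 := by simp [hd, ha1, ha2]
          rw [hda]
          constructor <;> linarith [hx0 a]
    have h1 : (fun a => x a + ε * d a) ∈ {x : E → ℝ | (∀ e, 0 ≤ x e) ∧
        ∀ S : Finset E, ∑ e ∈ S, x e ≤ (f S : ℝ)} := by
      refine ⟨fun a => (hda a).1, fun S => ?_⟩
      show ∑ a ∈ S, (x a + ε * d a) ≤ (f S : ℝ)
      rw [Finset.sum_add_distrib]
      exact hsumle S
    have h2 : (fun a => x a - ε * d a) ∈ {x : E → ℝ | (∀ e, 0 ≤ x e) ∧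
        ∀ S : Finset E, ∑ e ∈ S, x e ≤ (f S : ℝ)} := by
      refine ⟨fun a => (hda a).2, fun S => ?_⟩
      show ∑ a ∈ S, (x a - ε * d a) ≤ (f S : ℝ)
      rw [Finset.sum_sub_distrib]
      exact hsumle' S
    have hd0 := pert_aux hx hε h1 h2
    have := congrFun hd0 e1
    simp [hd, hne12] at this
  -- intersections of tight families are tight
  have inf_tight : ∀ s : Finset (Finset E),
      (∀ A ∈ s, ∑ a ∈ A, x a = (f A : ℝ)) → s.Nonempty →
      ∑ a ∈ s.inf id, x a = (f (s.inf id) : ℝ) := by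
    intro s
    induction s using Finset.cons_induction with
    | empty => intro _ h; exact absurd h (by simp)
    | cons A t hA ih =>
      intro hall _
      rw [Finset.inf_cons]
      rcases t.eq_empty_or_nonempty with rfl | htne
      · simpa using hall A (mem_cons_self A _)
      · have hA1 := hall A (mem_cons_self A _)
        have hA2 := ih (fun B hB => hall B (mem_cons_of_mem hB)) htne
        have := tight_inter A (t.inf id) hA1 hA2
        simpa [Finset.inf_eq_inter] using this
  -- minimal tight set containing e
  set Te : E → Finset E := fun e => univ.filter
    (fun a => ∀ S : Finset E, (∑ b ∈ S, x b = (f S : ℝ)) → e ∈ S → a ∈ S) with hTe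
  have mem_Te : ∀ e, e ∈ Te e := by
    intro e
    simp only [hTe, mem_filter, mem_univ, true_and]
    exact fun S _ h => h
  have Te_subset : ∀ e S, (∑ b ∈ S, x b = (f S : ℝ)) → e ∈ S → Te e ⊆ S := by
    intro e S hS heS a ha
    simp only [hTe, mem_filter, mem_univ, true_and] at ha
    exact ha S hS heS
  have Te_tight : ∀ e, 0 < x e → ∑ a ∈ Te e, x a = (f (Te e) : ℝ) := by
    intro e he
    obtain ⟨S0, hS0t, hS0e⟩ := exists_tight e he
    set F : Finset (Finset E) := univ.filter
      (fun S => (∑ b ∈ S, x b = (f S : ℝ)) ∧ e ∈ S) with hF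
    have hS0F : S0 ∈ F := by
      simp only [hF, mem_filter, mem_univ, true_and]
      exact ⟨hS0t, hS0e⟩
    have hEq : Te e = F.inf id := by
      apply Finset.Subset.antisymm
      · intro a ha
        simp only [hTe, mem_filter, mem_univ, true_and] at ha
        have hle : ({a} : Finset E) ≤ F.inf id := by
          apply Finset.le_inf
          intro S hSF
          simp only [hF, mem_filter, mem_univ, true_and] at hSF
          exact le_iff_subset.mpr (Finset.singleton_subset_iff.mpr (ha S hSF.1 hSF.2))
        exact Finset.singleton_subset_iff.mp (le_iff_subset.mp hle)
      · intro a ha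
        simp only [hTe, mem_filter, mem_univ, true_and]
        intro S hS heS
        have hSF : S ∈ F := by
          simp only [hF, mem_filter, mem_univ, true_and]
          exact ⟨hS, heS⟩
        exact le_iff_subset.mp (Finset.inf_le hSF) ha
    rw [hEq]
    exact inf_tight F (fun A hAF => by
      simp only [hF, mem_filter, mem_univ, true_and] at hAF
      exact hAF.1) ⟨S0, hS0F⟩
  -- sums of integers are integers
  have sum_int : ∀ s : Finset E, (∀ a ∈ s, ∃ m : ℤ, x a = m) →
      ∃ M : ℤ, ∑ a ∈ s, x a = M := by
    intro s
    induction s using Finset.cons_induction with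
    | empty => exact fun _ => ⟨0, by simp⟩
    | cons a t ha ih =>
      intro h
      obtain ⟨m, hm⟩ := h a (mem_cons_self a t)
      obtain ⟨M, hM⟩ := ih (fun b hb => h b (mem_cons_of_mem hb))
      exact ⟨m + M, by rw [Finset.sum_cons, hm, hM]; push_cast; ring⟩
  -- main induction on the size of the minimal tight set
  have main : ∀ n : ℕ, ∀ e : E, (Te e).card ≤ n → ∃ m : ℤ, x e = m := by
    intro n
    induction n with
    | zero =>
      intro e hcard
      rcases (hx0 e).lt_or_eq with he | he
      · exfalso
        have : 0 < (Te e).card := Finset.card_pos.mpr ⟨e, mem_Te e⟩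
        omega
      · exact ⟨0, by simp [← he]⟩
    | succ n ih =>
      intro e hcard
      rcases (hx0 e).lt_or_eq with he | he
      · have ht := Te_tight e he
        have hint : ∀ a ∈ (Te e).erase e, ∃ m : ℤ, x a = m := by
          intro a ha
          obtain ⟨hane, haTe⟩ := Finset.mem_erase.mp ha
          rcases (hx0 a).lt_or_eq with hax | hax
          · apply ih
            have hsub' : Te a ⊆ Te e := Te_subset a (Te e) ht haTe
            have hneq : Te a ≠ Te e := by
              intro heq
              apply no_shared a e hax he hane
              intro S hS
              constructor
              · intro haS
                have heTa : e ∈ Te a := by rw [heq]; exact mem_Te e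
                exact Te_subset a S hS haS heTa
              · intro heS
                exact Te_subset e S hS heS haTe
            have hlt := Finset.card_lt_card (ssubset_of_subset_of_ne hsub' hneq)
            omega
          · exact ⟨0, by simp [← hax]⟩
        obtain ⟨M, hM⟩ := sum_int _ hint
        refine ⟨f (Te e) - M, ?_⟩
        have hsum : x e + ∑ a ∈ (Te e).erase e, x a = (f (Te e) : ℝ) := by
          rw [Finset.add_sum_erase _ _ (mem_Te e)]
          exact ht
        rw [hM] at hsum
        push_cast
        linarith
      · exact ⟨0, by simp [← he]⟩
  intro e
  exact main (Te e).card e le_rfl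
end

section
/- Let E be finite and f the rank function of a laminar family \mathcal{L} = {L_v} with capacities C_v > 0, where f(S) = min over antichain covers A of S of ∑_{v∈A} C_v, and assume the full set E is covered by \mathcal{L}. Then for any x ∈ ℝ^E_{≥0}, x satisfies x(L_v) ≤ C_v for all v if and only if x(S) ≤ f(S) for all S ⊆ E; i.e., the laminar-constraint polytope equals the polymatroid P(f). -/
/-- The polytope defined by the per-member capacity constraints
of a laminar family equals the polymatroid of its derived rank function
f(S) = min over antichain covers A of S of ∑_{v∈A} C_v. -/
theorem laminar_polytope_eq_polymatroid
    {E : Type*} [Fintype E] [DecidableEq E]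
    (𝓛 : Finset (Finset E))
    (hne : ∀ L ∈ 𝓛, L.Nonempty)
    (hlam : ∀ L ∈ 𝓛, ∀ L' ∈ 𝓛, L ∩ L' = ∅ ∨ L ⊆ L' ∨ L' ⊆ L)
    (C : Finset E → ℝ) (hC : ∀ L ∈ 𝓛, 0 < C L)
    (hcov : ∀ e : E, ∃ L ∈ 𝓛, e ∈ L)
    (f : Finset E → ℝ)
    (hf : ∀ S : Finset E,
      f S = sInf {c : ℝ | ∃ A : Finset (Finset E), A ⊆ 𝓛 ∧
        (∀ L ∈ A, ∀ L' ∈ A, L ⊆ L' → L = L') ∧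
        S ⊆ A.sup id ∧ c = ∑ v ∈ A, C v}) :
    ∀ x : E → ℝ, (∀ e, 0 ≤ x e) →
      ((∀ L ∈ 𝓛, ∑ e ∈ L, x e ≤ C L) ↔
        (∀ S : Finset E, ∑ e ∈ S, x e ≤ f S)) := by
  intro x hx
  -- the set defining f S
  set T : Finset E → Set ℝ := fun S => {c : ℝ | ∃ A : Finset (Finset E), A ⊆ 𝓛 ∧
        (∀ L ∈ A, ∀ L' ∈ A, L ⊆ L' → L = L') ∧
        S ⊆ A.sup id ∧ c = ∑ v ∈ A, C v} with hT
  have hbdd : ∀ S, BddBelow (T S) := by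
    intro S
    refine ⟨0, ?_⟩
    rintro c ⟨A, hA𝓛, _, _, rfl⟩
    exact Finset.sum_nonneg fun v hv => (hC v (hA𝓛 hv)).le
  -- the maximal members of 𝓛 form an antichain cover of any S
  have hmax : ∀ S : Finset E, ∃ A : Finset (Finset E), A ⊆ 𝓛 ∧
      (∀ L ∈ A, ∀ L' ∈ A, L ⊆ L' → L = L') ∧ S ⊆ A.sup id := by
    intro S
    classical
    refine ⟨𝓛.filter (fun L => ∀ L' ∈ 𝓛, L ⊆ L' → L = L'), Finset.filter_subset _ _,
      ?_, ?_⟩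
    · intro L hL L' hL' hsub
      simp only [Finset.mem_filter] at hL hL'
      exact hL.2 L' hL'.1 hsub
    · intro e _
      obtain ⟨L, hL, heL⟩ := hcov e
      -- find a maximal superset of L in 𝓛
      have htne : (𝓛.filter (fun L' => L ⊆ L')).Nonempty :=
        ⟨L, Finset.mem_filter.2 ⟨hL, subset_rfl⟩⟩
      obtain ⟨M, hM, hMmax⟩ := Finset.exists_max_image _ Finset.card htne
      simp only [Finset.mem_filter] at hM
      have hMmaximal : ∀ L' ∈ 𝓛, M ⊆ L' → M = L' := by
        intro L' hL' hsub
        have : L' ∈ 𝓛.filter (fun L' => L ⊆ L') :=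
          Finset.mem_filter.2 ⟨hL', hM.2.trans hsub⟩
        exact Finset.eq_of_subset_of_card_le hsub (hMmax L' this)
      have : M ∈ 𝓛.filter (fun L => ∀ L' ∈ 𝓛, L ⊆ L' → L = L') :=
        Finset.mem_filter.2 ⟨hM.1, hMmaximal⟩
      exact (Finset.le_sup (f := id) this) (hM.2 heL)
  constructor
  · -- constraints imply polymatroid
    intro h S
    rw [hf S]
    refine le_csInf ?_ ?_
    · obtain ⟨A, h1, h2, h3⟩ := hmax S
      exact ⟨∑ v ∈ A, C v, A, h1, h2, h3, rfl⟩
    · rintro c ⟨A, hA𝓛, hanti, hScov, rfl⟩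
      -- antichain members are pairwise disjoint
      have hdisj : (A : Set (Finset E)).PairwiseDisjoint id := by
        intro L hL L' hL' hne'
        rcases hlam L (hA𝓛 hL) L' (hA𝓛 hL') with hint | hsub | hsub
        · simpa [Finset.disjoint_iff_inter_eq_empty] using hint
        · exact absurd (hanti L hL L' hL' hsub) hne'
        · exact absurd (hanti L' hL' L hL hsub).symm hne'
      calc ∑ e ∈ S, x e ≤ ∑ e ∈ A.sup id, x e :=
            Finset.sum_le_sum_of_subset_of_nonneg hScov (fun e _ _ => hx e)
        _ = ∑ L ∈ A, ∑ e ∈ L, x e := by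
            rw [Finset.sup_eq_biUnion, Finset.sum_biUnion hdisj]; rfl
        _ ≤ ∑ L ∈ A, C L := Finset.sum_le_sum fun L hL => h L (hA𝓛 hL)
  · -- polymatroid implies constraints
    intro h L hL
    refine le_trans (h L) ?_
    rw [hf L]
    refine csInf_le (hbdd L) ?_
    exact ⟨{L}, by simpa using hL,
      by intro a ha b hb _; simp at ha hb; simp [ha, hb],
      by simp, by simp⟩
end
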